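/- Let H be a cocommutative bialgebra over a commutative ring R, F a Drinfel'd twist on H with R-matrix ℛ := F₂₁ · F⁻¹ and ℛ⁻¹ = τ(ℛ) = Σ_k R_k ⊗ R^k, let L be a Lie algebra in H-modules with twisted bracket [x, y]_⋆ := Σ_k ⁅f̄^k(x), f̄_k(y)⁆, and let M be an L-module in H-modules with twisted action x ⋆ m := Σ_k f̄^k(x) · f̄_k(m). Then the twisted action is a braided representation of the braided Lie algebra (L, [·,·]_⋆): for all x, y ∈ L and m ∈ M, x ⋆ (y ⋆ m) − Σ_k R_k(y) ⋆ (R^k(x) ⋆ m) = [x, y]_⋆ ⋆ m. -/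

import Mathlib

open scoped TensorProduct

noncomputable section

/-- `Δ ⊗ id` as an algebra homomorphism `H ⊗ H → (H ⊗ H) ⊗ H`. -/
def comulTensorId (R H : Type*) [CommRing R] [Ring H] [Bialgebra R H] :
    (H ⊗[R] H) →ₐ[R] (H ⊗[R] H) ⊗[R] H :=
  Algebra.TensorProduct.map (Bialgebra.comulAlgHom R H) (AlgHom.id R H)

/-- `id ⊗ Δ` as an algebra homomorphism `H ⊗ H → H ⊗ (H ⊗ H)`. -/
def idTensorComul (R H : Type*) [CommRing R] [Ring H] [Bialgebra R H] :
    (H ⊗[R] H) →ₐ[R] H ⊗[R] (H ⊗[R] H) :=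
  Algebra.TensorProduct.map (AlgHom.id R H) (Bialgebra.comulAlgHom R H)

/-- `F` is a Drinfel'd twist on the bialgebra `H` with two-sided inverse `Finv`:
it is invertible and satisfies the 2-cocycle condition
`(F ⊗ 1) · (Δ ⊗ id)(F) = (1 ⊗ F) · (id ⊗ Δ)(F)` in `H ⊗ H ⊗ H`. -/
def IsDrinfeldTwist (R : Type*) {H : Type*} [CommRing R] [Ring H] [Bialgebra R H]
    (F Finv : H ⊗[R] H) : Prop :=
  F * Finv = 1 ∧ Finv * F = 1 ∧
    (TensorProduct.assoc R H H H) ((F ⊗ₜ[R] (1 : H)) * comulTensorId R H F) =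
      ((1 : H) ⊗ₜ[R] F) * idTensorComul R H F

/-- The `R`-matrix `ℛ := F₂₁ · F⁻¹` associated to a Drinfel'd twist, where
`F₂₁ = τ(F)` and `τ` is the flip of `H ⊗ H`. -/
def Rmat (R : Type*) {H : Type*} [CommRing R] [Ring H] [Bialgebra R H]
    (F Finv : H ⊗[R] H) : H ⊗[R] H :=
  (Algebra.TensorProduct.comm R H H) F * Finv

/-- The bialgebra `H` is cocommutative: `τ ∘ Δ = Δ`. -/
def IsCocommutative (R : Type*) (H : Type*) [CommRing R] [Ring H] [Bialgebra R H] : Prop :=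
  ∀ x : H, (Algebra.TensorProduct.comm R H H) (Coalgebra.comul (R := R) x) =
    Coalgebra.comul (R := R) x

/-- The action of an element of `H ⊗ H` on `M ⊗ N`, acting with the first leg on `M`
and the second leg on `N` through the given representations. -/
def legAct {R H : Type*} [CommRing R] [Ring H] [Algebra R H]
    {M N : Type*} [AddCommGroup M] [Module R M] [AddCommGroup N] [Module R N]
    (ρM : H →ₐ[R] Module.End R M) (ρN : H →ₐ[R] Module.End R N) :
    H ⊗[R] H →ₗ[R] (M ⊗[R] N →ₗ[R] M ⊗[R] N) :=
  (TensorProduct.homTensorHomMap (RingHom.id R) M N M N).comp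
    (TensorProduct.map ρM.toLinearMap ρN.toLinearMap)

/-- The Lie bracket of `L` as an `R`-bilinear map. -/
def lieBil (R L : Type*) [CommRing R] [LieRing L] [LieAlgebra R L] :
    L →ₗ[R] L →ₗ[R] L :=
  LinearMap.mk₂ R (fun x y => ⁅x, y⁆) add_lie smul_lie lie_add lie_smul

/-- `ρ` makes the `R`-Lie algebra `L` into a Lie algebra in `H`-modules:
`ρ(h)⁅x, y⁆ = Σ ⁅ρ(h₍₁₎)(x), ρ(h₍₂₎)(y)⁆`. -/
def IsHLieAlgebra (R : Type*) {H L : Type*} [CommRing R] [Ring H] [Bialgebra R H]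
    [LieRing L] [LieAlgebra R L] (ρ : H →ₐ[R] Module.End R L) : Prop :=
  ∀ (h : H) (x y : L),
    ρ h ⁅x, y⁆ =
      TensorProduct.lift (lieBil R L)
        (legAct ρ ρ (Coalgebra.comul (R := R) h) (x ⊗ₜ[R] y))

/-- The twisted bracket `[x, y]_⋆ := Σ ⁅f̄ᵏ(x), f̄ₖ(y)⁆`, as a linear map on `L ⊗ L`. -/
def starBracket {R H L : Type*} [CommRing R] [Ring H] [Bialgebra R H]
    [LieRing L] [LieAlgebra R L] (ρ : H →ₐ[R] Module.End R L) (Finv : H ⊗[R] H) :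
    L ⊗[R] L →ₗ[R] L :=
  (TensorProduct.lift (lieBil R L)).comp (legAct ρ ρ Finv)

/-- The twisted action `x ⋆ m := Σ f̄ᵏ(x) · f̄ₖ(m)`, as a linear map on `L ⊗ M`. -/
def starAction {R H L M : Type*} [CommRing R] [Ring H] [Bialgebra R H]
    [LieRing L] [LieAlgebra R L] [AddCommGroup M] [Module R M]
    (ρL : H →ₐ[R] Module.End R L) (ρM : H →ₐ[R] Module.End R M)
    (β : L →ₗ[R] M →ₗ[R] M) (Finv : H ⊗[R] H) : L ⊗[R] M →ₗ[R] M :=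
  (TensorProduct.lift β).comp (legAct ρL ρM Finv)

/-!
Put `X := (Δ ⊗ id)(F⁻¹) · (F⁻¹ ⊗ 1)` and let `X₂₁₃` be its flip in the first two legs. Because the
action `L ⊗ M → M` and the bracket are `H`-equivariant, every term is the untwisted double action
`L ⊗ (L ⊗ M) → M` precomposed with the action of some element of `H ⊗ H ⊗ H`. For `x ⋆ (y ⋆ m)` that
element is `(id ⊗ Δ)(F⁻¹) · (1 ⊗ F⁻¹)`, which is `X` by the inverse cocycle condition; by the module
axiom `[x, y]_⋆ ⋆ m` is the double action of `X` on `x ⊗ y ⊗ m` minus that of `X₂₁₃` on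
`y ⊗ x ⊗ m`; and the braiding term is the double action of `X · (τ(ℛ) ⊗ 1)` on `y ⊗ x ⊗ m`, where
`X · (τ(ℛ) ⊗ 1) = (Δ ⊗ id)(F⁻¹) · (τ(F⁻¹) ⊗ 1) = X₂₁₃` by cocommutativity.
-/

open TensorProduct

section PairAct

variable {R A B C M N P Q : Type*} [CommRing R]
  [Ring A] [Algebra R A] [Ring B] [Algebra R B] [Ring C] [Algebra R C]
  [AddCommGroup M] [Module R M] [AddCommGroup N] [Module R N]
  [AddCommGroup P] [Module R P] [AddCommGroup Q] [Module R Q]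

def pairAct (ρ₁ : A →ₐ[R] Module.End R M) (ρ₂ : B →ₐ[R] Module.End R N) :
    A ⊗[R] B →ₐ[R] Module.End R (M ⊗[R] N) :=
  Module.endTensorEndAlgHom.comp (Algebra.TensorProduct.map ρ₁ ρ₂)

@[simp]
theorem pairAct_tmul (ρ₁ : A →ₐ[R] Module.End R M) (ρ₂ : B →ₐ[R] Module.End R N) (a : A) (b : B) :
    pairAct ρ₁ ρ₂ (a ⊗ₜ b) = map (ρ₁ a) (ρ₂ b) :=
  rfl

theorem legAct_eq_pairAct (ρ₁ : A →ₐ[R] Module.End R M) (ρ₂ : A →ₐ[R] Module.End R N)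
    (z : A ⊗[R] A) : legAct ρ₁ ρ₂ z = pairAct ρ₁ ρ₂ z := by
  induction z using TensorProduct.induction_on with
  | zero => simp
  | tmul a b => ext; simp [legAct]
  | add u v hu hv => simp only [map_add, hu, hv]

theorem lTensor_comp_pairAct {ρ : C →ₐ[R] Module.End R M} {ρP : B →ₐ[R] Module.End R P}
    {ρQ : A →ₐ[R] Module.End R Q} {φ : A →ₐ[R] B} {f : P →ₗ[R] Q}
    (hf : ∀ a, f ∘ₗ ρP (φ a) = ρQ a ∘ₗ f) (ξ : C ⊗[R] A) :
    f.lTensor M ∘ₗ pairAct ρ ρP (Algebra.TensorProduct.map (AlgHom.id R C) φ ξ) =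
      pairAct ρ ρQ ξ ∘ₗ f.lTensor M := by
  induction ξ using TensorProduct.induction_on with
  | zero => simp
  | tmul c a =>
    simp only [Algebra.TensorProduct.map_tmul, AlgHom.id_apply, pairAct_tmul, LinearMap.lTensor,
      ← map_comp, hf, LinearMap.id_comp, LinearMap.comp_id]
  | add u v hu hv => simp only [map_add, LinearMap.comp_add, LinearMap.add_comp, hu, hv]

theorem rTensor_comp_pairAct {ρ : C →ₐ[R] Module.End R M} {ρP : B →ₐ[R] Module.End R P}
    {ρQ : A →ₐ[R] Module.End R Q} {φ : A →ₐ[R] B} {f : P →ₗ[R] Q}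
    (hf : ∀ a, f ∘ₗ ρP (φ a) = ρQ a ∘ₗ f) (ξ : A ⊗[R] C) :
    f.rTensor M ∘ₗ pairAct ρP ρ (Algebra.TensorProduct.map φ (AlgHom.id R C) ξ) =
      pairAct ρQ ρ ξ ∘ₗ f.rTensor M := by
  induction ξ using TensorProduct.induction_on with
  | zero => simp
  | tmul a c =>
    simp only [Algebra.TensorProduct.map_tmul, AlgHom.id_apply, pairAct_tmul, LinearMap.rTensor,
      ← map_comp, hf, LinearMap.id_comp, LinearMap.comp_id]
  | add u v hu hv => simp only [map_add, LinearMap.comp_add, LinearMap.add_comp, hu, hv]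

theorem assoc_comp_pairAct_pairAct (ρ₁ : A →ₐ[R] Module.End R M) (ρ₂ : B →ₐ[R] Module.End R N)
    (ρ₃ : C →ₐ[R] Module.End R P) (ζ : (A ⊗[R] B) ⊗[R] C) :
    (TensorProduct.assoc R M N P).toLinearMap ∘ₗ pairAct (pairAct ρ₁ ρ₂) ρ₃ ζ =
      pairAct ρ₁ (pairAct ρ₂ ρ₃) (Algebra.TensorProduct.assoc R R R A B C ζ) ∘ₗ
        (TensorProduct.assoc R M N P).toLinearMap := by
  induction ζ using TensorProduct.induction_on with
  | zero => simp
  | tmul p c =>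
    induction p using TensorProduct.induction_on with
    | zero => simp
    | tmul a b => simp [map_map_comp_assoc_eq]
    | add u v hu hv =>
      simp only [add_tmul, map_add, LinearMap.comp_add, LinearMap.add_comp, hu, hv]
  | add u v hu hv => simp only [map_add, LinearMap.comp_add, LinearMap.add_comp, hu, hv]

theorem assoc_comp_rTensor_pairAct (ρ₁ : A →ₐ[R] Module.End R M) (ρ₂ : B →ₐ[R] Module.End R N)
    (ρ₃ : C →ₐ[R] Module.End R P) (ξ : A ⊗[R] B) :
    (TensorProduct.assoc R M N P).toLinearMap ∘ₗ (pairAct ρ₁ ρ₂ ξ).rTensor P =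
      pairAct ρ₁ (pairAct ρ₂ ρ₃) (Algebra.TensorProduct.assoc R R R A B C (ξ ⊗ₜ 1)) ∘ₗ
        (TensorProduct.assoc R M N P).toLinearMap := by
  rw [← assoc_comp_pairAct_pairAct, pairAct_tmul, map_one, Module.End.one_eq_id, LinearMap.rTensor]

theorem rTensor_comm_comp_pairAct_pairAct (ρ₁ : A →ₐ[R] Module.End R M)
    (ρ₂ : B →ₐ[R] Module.End R N) (ρ₃ : C →ₐ[R] Module.End R P) (ζ : (A ⊗[R] B) ⊗[R] C) :
    (TensorProduct.comm R M N).toLinearMap.rTensor P ∘ₗ pairAct (pairAct ρ₁ ρ₂) ρ₃ ζ =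
      pairAct (pairAct ρ₂ ρ₁) ρ₃
          (Algebra.TensorProduct.map (Algebra.TensorProduct.comm R A B).toAlgHom (AlgHom.id R C) ζ) ∘ₗ
        (TensorProduct.comm R M N).toLinearMap.rTensor P := by
  induction ζ using TensorProduct.induction_on with
  | zero => simp
  | tmul p c =>
    induction p using TensorProduct.induction_on with
    | zero => simp
    | tmul a b =>
      simp [LinearMap.rTensor, ← map_comp, map_comp_comm_eq]
    | add u v hu hv =>
      simp only [add_tmul, map_add, LinearMap.comp_add, LinearMap.add_comp, hu, hv]
  | add u v hu hv => simp only [map_add, LinearMap.comp_add, LinearMap.add_comp, hu, hv]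

end PairAct

section TwistedAction

variable {R H L M N P : Type*} [CommRing R] [Ring H] [Bialgebra R H] [LieRing L] [LieAlgebra R L]
  [AddCommGroup M] [Module R M] [AddCommGroup N] [Module R N] [AddCommGroup P] [Module R P]

theorem lift_comp_pairAct_comul {ρ₁ : H →ₐ[R] Module.End R M} {ρ₂ : H →ₐ[R] Module.End R N}
    {ρ₃ : H →ₐ[R] Module.End R P} {b : M →ₗ[R] N →ₗ[R] P}
    (hb : ∀ (h : H) (x : M) (y : N),
      ρ₃ h (b x y) = lift b (legAct ρ₁ ρ₂ (Coalgebra.comul (R := R) h) (x ⊗ₜ[R] y)))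
    (h : H) :
    lift b ∘ₗ pairAct ρ₁ ρ₂ (Bialgebra.comulAlgHom R H h) = ρ₃ h ∘ₗ lift b := by
  ext x y
  simp [hb, legAct_eq_pairAct]

theorem starAction_eq_lift_comp_pairAct (ρL : H →ₐ[R] Module.End R L)
    (ρM : H →ₐ[R] Module.End R M) (β : L →ₗ[R] M →ₗ[R] M) (ξ : H ⊗[R] H) :
    starAction ρL ρM β ξ = lift β ∘ₗ pairAct ρL ρM ξ := by
  rw [starAction, legAct_eq_pairAct]

theorem starBracket_eq_lift_comp_pairAct (ρ : H →ₐ[R] Module.End R L) (ξ : H ⊗[R] H) :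
    starBracket ρ ξ = lift (lieBil R L) ∘ₗ pairAct ρ ρ ξ := by
  rw [starBracket, legAct_eq_pairAct]

theorem starAction_comp_lTensor_starAction {ρL : H →ₐ[R] Module.End R L}
    {ρM : H →ₐ[R] Module.End R M} {β : L →ₗ[R] M →ₗ[R] M}
    (hβH : ∀ (h : H) (x : L) (m : M),
      ρM h (β x m) = lift β (legAct ρL ρM (Coalgebra.comul (R := R) h) (x ⊗ₜ[R] m)))
    (ξ η : H ⊗[R] H) :
    starAction ρL ρM β ξ ∘ₗ (starAction ρL ρM β η).lTensor L =
      lift β ∘ₗ (lift β).lTensor L ∘ₗ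
        pairAct ρL (pairAct ρL ρM) (idTensorComul R H ξ * (1 ⊗ₜ η)) := by
  have hη : (pairAct ρL ρM η).lTensor L = pairAct ρL (pairAct ρL ρM) (1 ⊗ₜ η) := by
    rw [pairAct_tmul, map_one, Module.End.one_eq_id, LinearMap.lTensor]
  simp only [starAction_eq_lift_comp_pairAct, LinearMap.lTensor_comp, map_mul,
    Module.End.mul_eq_comp, ← hη, idTensorComul, LinearMap.comp_assoc]
  rw [← LinearMap.comp_assoc (h := (lift β).lTensor L),
    lTensor_comp_pairAct (lift_comp_pairAct_comul hβH), LinearMap.comp_assoc]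

theorem starAction_comp_rTensor_starBracket {ρL : H →ₐ[R] Module.End R L}
    (hL : IsHLieAlgebra R ρL) (ρM : H →ₐ[R] Module.End R M) (β : L →ₗ[R] M →ₗ[R] M)
    (ξ η : H ⊗[R] H) :
    starAction ρL ρM β ξ ∘ₗ (starBracket ρL η).rTensor M =
      lift β ∘ₗ (lift (lieBil R L)).rTensor M ∘ₗ
        pairAct (pairAct ρL ρL) ρM (comulTensorId R H ξ * (η ⊗ₜ 1)) := by
  have hη : (pairAct ρL ρL η).rTensor M = pairAct (pairAct ρL ρL) ρM (η ⊗ₜ 1) := by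
    rw [pairAct_tmul, map_one, Module.End.one_eq_id, LinearMap.rTensor]
  simp only [starAction_eq_lift_comp_pairAct, starBracket_eq_lift_comp_pairAct,
    LinearMap.rTensor_comp, map_mul, Module.End.mul_eq_comp, ← hη, comulTensorId,
    LinearMap.comp_assoc]
  rw [← LinearMap.comp_assoc (h := (lift (lieBil R L)).rTensor M),
    rTensor_comp_pairAct (lift_comp_pairAct_comul (b := lieBil R L) hL), LinearMap.comp_assoc]

theorem lift_comp_rTensor_lift_lieBil {β : L →ₗ[R] M →ₗ[R] M}
    (hβlie : ∀ (x y : L) (m : M), β ⁅x, y⁆ m = β x (β y m) - β y (β x m)) :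
    lift β ∘ₗ (lift (lieBil R L)).rTensor M =
      lift β ∘ₗ (lift β).lTensor L ∘ₗ (TensorProduct.assoc R L L M).toLinearMap -
        lift β ∘ₗ (lift β).lTensor L ∘ₗ (TensorProduct.assoc R L L M).toLinearMap ∘ₗ
          (TensorProduct.comm R L L).toLinearMap.rTensor M := by
  ext x y m
  simp [lieBil, hβlie]

theorem starAction_comp_rTensor_starBracket_eq_sub {ρL : H →ₐ[R] Module.End R L}
    (hL : IsHLieAlgebra R ρL) (ρM : H →ₐ[R] Module.End R M) {β : L →ₗ[R] M →ₗ[R] M}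
    (hβlie : ∀ (x y : L) (m : M), β ⁅x, y⁆ m = β x (β y m) - β y (β x m))
    (ξ η : H ⊗[R] H) :
    starAction ρL ρM β ξ ∘ₗ (starBracket ρL η).rTensor M =
      lift β ∘ₗ (lift β).lTensor L ∘ₗ pairAct ρL (pairAct ρL ρM)
          (Algebra.TensorProduct.assoc R R R H H H (comulTensorId R H ξ * (η ⊗ₜ 1))) ∘ₗ
          (TensorProduct.assoc R L L M).toLinearMap -
        lift β ∘ₗ (lift β).lTensor L ∘ₗ pairAct ρL (pairAct ρL ρM)
          (Algebra.TensorProduct.assoc R R R H H H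
            (Algebra.TensorProduct.map (Algebra.TensorProduct.comm R H H).toAlgHom (AlgHom.id R H)
              (comulTensorId R H ξ * (η ⊗ₜ 1)))) ∘ₗ
          (TensorProduct.assoc R L L M).toLinearMap ∘ₗ
          (TensorProduct.comm R L L).toLinearMap.rTensor M := by
  rw [starAction_comp_rTensor_starBracket hL, ← LinearMap.comp_assoc,
    lift_comp_rTensor_lift_lieBil hβlie, LinearMap.sub_comp]
  simp only [LinearMap.comp_assoc, rTensor_comm_comp_pairAct_pairAct]
  simp only [← LinearMap.comp_assoc, assoc_comp_pairAct_pairAct]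

end TwistedAction

section Twist

variable {R H : Type*} [CommRing R] [Ring H] [Bialgebra R H]

theorem IsCocommutative.flip_comulTensorId (hcc : IsCocommutative R H) (ξ : H ⊗[R] H) :
    Algebra.TensorProduct.map (Algebra.TensorProduct.comm R H H).toAlgHom (AlgHom.id R H)
      (comulTensorId R H ξ) = comulTensorId R H ξ := by
  induction ξ using TensorProduct.induction_on with
  | zero => simp
  | tmul a b => simp [comulTensorId, hcc a]
  | add u v hu hv => simp only [map_add, hu, hv]

theorem IsDrinfeldTwist.assoc_inv_cocycle {F Finv : H ⊗[R] H} (hF : IsDrinfeldTwist R F Finv) :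
    Algebra.TensorProduct.assoc R R R H H H (comulTensorId R H Finv * (Finv ⊗ₜ 1)) =
      idTensorComul R H Finv * (1 ⊗ₜ Finv) := by
  obtain ⟨hFFinv, hFinvF, hcocycle⟩ := hF
  have hleft : (F ⊗ₜ[R] (1 : H) * comulTensorId R H F) *
      (comulTensorId R H Finv * (Finv ⊗ₜ 1)) = 1 := by
    rw [mul_assoc, ← mul_assoc (comulTensorId R H F), ← map_mul, hFFinv, map_one, one_mul,
      Algebra.TensorProduct.tmul_mul_tmul, hFFinv, one_mul, ← Algebra.TensorProduct.one_def]
  have hright : (idTensorComul R H Finv * ((1 : H) ⊗ₜ[R] Finv)) *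
      ((1 ⊗ₜ F) * idTensorComul R H F) = 1 := by
    rw [mul_assoc, ← mul_assoc (1 ⊗ₜ Finv), Algebra.TensorProduct.tmul_mul_tmul, hFinvF, one_mul,
      ← Algebra.TensorProduct.one_def, one_mul, ← map_mul, hFinvF, map_one]
  refine (left_inv_eq_right_inv (a := Algebra.TensorProduct.assoc R R R H H H
    (F ⊗ₜ 1 * comulTensorId R H F)) ?_ ?_).symm
  · exact (congrArg _ hcocycle).trans hright
  · rw [← map_mul, hleft, map_one]

theorem IsCocommutative.mul_flip_Rmat_tmul_one (hcc : IsCocommutative R H) {F Finv : H ⊗[R] H}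
    (hFinvF : Finv * F = 1) :
    comulTensorId R H Finv * (Finv ⊗ₜ 1) *
        ((Algebra.TensorProduct.comm R H H (Rmat R F Finv)) ⊗ₜ 1) =
      Algebra.TensorProduct.map (Algebra.TensorProduct.comm R H H).toAlgHom (AlgHom.id R H)
        (comulTensorId R H Finv * (Finv ⊗ₜ 1)) := by
  have hflipR : Algebra.TensorProduct.comm R H H (Rmat R F Finv) =
      F * Algebra.TensorProduct.comm R H H Finv := by
    rw [Rmat, map_mul]
    exact congrArg (· * _) (TensorProduct.comm_comm R H H F)
  rw [map_mul, hcc.flip_comulTensorId, mul_assoc, hflipR, Algebra.TensorProduct.tmul_mul_tmul,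
    ← mul_assoc, hFinvF, one_mul, mul_one]
  rfl

end Twist

/-- For a Drinfel'd twist on a cocommutative bialgebra `H`, a Lie
algebra `L` in `H`-modules, and an `L`-module `M` in `H`-modules, the twisted action is
a braided representation of the braided Lie algebra `(L, [·,·]_⋆)`:
`x ⋆ (y ⋆ m) − Σ_k R_k(y) ⋆ (R^k(x) ⋆ m) = [x, y]_⋆ ⋆ m`,
where `ℛ⁻¹ = τ(ℛ) = Σ_k R_k ⊗ R^k`. -/
theorem starAction_braided_representation
    (R : Type*) [CommRing R] (H : Type*) [Ring H] [Bialgebra R H]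
    (hcc : IsCocommutative R H)
    (L : Type*) [LieRing L] [LieAlgebra R L]
    (ρL : H →ₐ[R] Module.End R L) (hL : IsHLieAlgebra R ρL)
    (M : Type*) [AddCommGroup M] [Module R M]
    (ρM : H →ₐ[R] Module.End R M)
    (β : L →ₗ[R] M →ₗ[R] M)
    (hβlie : ∀ (x y : L) (m : M), β ⁅x, y⁆ m = β x (β y m) - β y (β x m))
    (hβH : ∀ (h : H) (x : L) (m : M),
      ρM h (β x m) =
        TensorProduct.lift β (legAct ρL ρM (Coalgebra.comul (R := R) h) (x ⊗ₜ[R] m)))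
    (F Finv : H ⊗[R] H) (hF : IsDrinfeldTwist R F Finv) :
    ∀ (x y : L) (m : M),
      starAction ρL ρM β Finv (x ⊗ₜ[R] (starAction ρL ρM β Finv (y ⊗ₜ[R] m))) -
          ((starAction ρL ρM β Finv).comp
              (TensorProduct.map LinearMap.id (starAction ρL ρM β Finv)))
            ((TensorProduct.assoc R L L M)
              ((legAct ρL ρL ((Algebra.TensorProduct.comm R H H) (Rmat R F Finv))
                  (y ⊗ₜ[R] x)) ⊗ₜ[R] m)) =
        starAction ρL ρM β Finv ((starBracket ρL Finv (x ⊗ₜ[R] y)) ⊗ₜ[R] m) := by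
  intro x y m
  have hdouble (w : L ⊗[R] (L ⊗[R] M)) :
      (starAction ρL ρM β Finv ∘ₗ (starAction ρL ρM β Finv).lTensor L) w =
        lift β ((lift β).lTensor L (pairAct ρL (pairAct ρL ρM)
          (Algebra.TensorProduct.assoc R R R H H H (comulTensorId R H Finv * (Finv ⊗ₜ 1))) w)) := by
    rw [starAction_comp_lTensor_starAction hβH, hF.assoc_inv_cocycle]
    rfl
  have hbracket := LinearMap.congr_fun
    (starAction_comp_rTensor_starBracket_eq_sub hL ρM hβlie Finv Finv) ((x ⊗ₜ y) ⊗ₜ m)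
  have hbraiding := LinearMap.congr_fun
    (assoc_comp_rTensor_pairAct ρL ρL ρM (Algebra.TensorProduct.comm R H H (Rmat R F Finv)))
    ((y ⊗ₜ x) ⊗ₜ m)
  simp only [LinearMap.comp_apply, LinearMap.sub_apply, LinearMap.rTensor_tmul,
    LinearEquiv.coe_coe, TensorProduct.assoc_tmul, TensorProduct.comm_tmul] at hbracket hbraiding
  rw [legAct_eq_pairAct, hbraiding, ← LinearMap.lTensor_def, hdouble, ← Module.End.mul_apply,
    ← map_mul, ← map_mul, hcc.mul_flip_Rmat_tmul_one hF.2.1, hbracket]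
  exact congrArg (· - _) (hdouble (x ⊗ₜ (y ⊗ₜ m)))
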